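/- Let Φ = f + g with f : ℝ^d → ℝ convex with L-Lipschitz gradient and g : ℝ^d → ℝ continuous convex, let x⋆ be a minimizer of Φ, let r ≥ 2 and 0 < s < 1/L. For the FISTA iterates x_k = y_{k−1} − s·G_s(y_{k−1}), y_k = x_k + ((k−1)/(k+r))(x_k − x_{k−1}) with x₀ = y₀ ∈ ℝ^d, one has lim_{k→∞} k³ · min_{0 ≤ i ≤ k} ‖G_s(y_i)‖² = 0. -/

import Mathlib

/-!
Lyapunov argument. The descent lemma for `f`, the gradient inequality for `f` and the optimality
condition of the proximal step for `g` combine into: for `x⁺ = P_s(u)` and every `z`,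
`2s Φ(x⁺) ≤ 2s Φ(z) + ‖u - z‖² - ‖x⁺ - z‖² - (1 - Ls) ‖u - x⁺‖²`.
With `T_k = (k + r - 1) / r`, which satisfies `T_{k+1}(T_{k+1} - 1) ≤ T_k²` because `r ≥ 2`,
the energy `T_k² · 2s(Φ(x_k) - Φ(x⋆)) + ‖T_{k+1} y_k - (T_{k+1} - 1) x_k - x⋆‖²` drops by at
least `(1 - Ls) T_{k+1}² ‖y_k - x_{k+1}‖²` per step, so `∑ (k + 1)² ‖G_s(y_k)‖² < ∞`. Bounding
the minimum by the terms with index in `[k/2, k]` gives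
`k³ min_{i ≤ k} ‖G_s(y_i)‖² ≤ 8 ∑_{i ≥ k/2} (i + 1)² ‖G_s(y_i)‖²`, a vanishing tail.
-/

open scoped RealInnerProductSpace Topology

open Set Filter Finset AffineMap

lemma nonpos_of_forall_le_mul {a b : ℝ} (h : ∀ t ∈ Ioc (0 : ℝ) 1, a ≤ t * b) : a ≤ 0 := by
  have hlim : Tendsto (fun t : ℝ => t * b) (𝓝[>] 0) (𝓝 0) := by
    have := (continuous_mul_const b).tendsto' (0 : ℝ) 0 (zero_mul b)
    exact this.mono_left nhdsWithin_le_nhds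
  exact ge_of_tendsto hlim (eventually_of_mem (Ioc_mem_nhdsGT zero_lt_one) h)

section Gradient

variable {E : Type*} [NormedAddCommGroup E] [InnerProductSpace ℝ E]

lemma IsMinOn.add_inner_le_of_prox {g : E → ℝ} {s : ℝ} {w p : E} (hg : ConvexOn ℝ univ g)
    (hp : IsMinOn (fun z => 1 / (2 * s) * ‖z - w‖ ^ 2 + g z) univ p) (z : E) :
    g p + s⁻¹ * ⟪w - p, z - p⟫ ≤ g z := by
  suffices g p + s⁻¹ * ⟪w - p, z - p⟫ - g z ≤ 0 by linarith
  refine nonpos_of_forall_le_mul (b := s⁻¹ / 2 * ‖z - p‖ ^ 2) fun t ht => ?_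
  have hmin := isMinOn_iff.mp hp (p + t • (z - p)) (mem_univ _)
  have hconv : g (p + t • (z - p)) ≤ (1 - t) * g p + t * g z := by
    simpa [smul_sub, sub_smul, ← add_sub_assoc, add_comm] using
      hg.2 (mem_univ p) (mem_univ z) (sub_nonneg.2 ht.2) ht.1.le (sub_add_cancel 1 t)
  have hnorm : ‖p + t • (z - p) - w‖ ^ 2
      = ‖p - w‖ ^ 2 - 2 * t * ⟪w - p, z - p⟫ + t ^ 2 * ‖z - p‖ ^ 2 := by
    rw [show p + t • (z - p) - w = (p - w) + t • (z - p) by abel, norm_add_sq_real,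
      real_inner_smul_right, norm_smul, mul_pow, Real.norm_eq_abs, sq_abs, ← neg_sub w p,
      inner_neg_left]
    ring
  rw [hnorm] at hmin
  exact le_of_mul_le_mul_left (by linear_combination hmin + hconv) ht.1

variable [CompleteSpace E] {f : E → ℝ} {f' : E → E}

lemma HasGradientAt.hasDerivAt_comp_lineMap {x y v : E} {t : ℝ}
    (hf : HasGradientAt f v (lineMap x y t)) :
    HasDerivAt (f ∘ lineMap x y) ⟪v, y - x⟫ t := by
  simpa using hf.hasFDerivAt.comp_hasDerivAt t hasDerivAt_lineMap

lemma ConvexOn.add_inner_le_of_hasGradientAt {x v : E} (hfc : ConvexOn ℝ univ f)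
    (hf : HasGradientAt f v x) (z : E) : f x + ⟪v, z - x⟫ ≤ f z := by
  have hslope := (hfc.comp_affineMap (lineMap x z)).le_slope_of_hasDerivAt (mem_univ 0)
    (mem_univ 1) zero_lt_one (HasGradientAt.hasDerivAt_comp_lineMap (by simpa using hf))
  simp only [slope_def_field, Function.comp_apply, lineMap_apply_one, lineMap_apply_zero,
    sub_zero, div_one] at hslope
  linarith

theorem le_add_inner_add_sq_of_lipschitz_gradient {L : ℝ}
    (hf : ∀ x, HasGradientAt f (f' x) x) (hlip : ∀ x y, ‖f' x - f' y‖ ≤ L * ‖x - y‖)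
    (x y : E) : f y ≤ f x + ⟪f' x, y - x⟫ + L / 2 * ‖y - x‖ ^ 2 := by
  set ψ : ℝ → ℝ := fun t => f (lineMap x y t) - t * ⟪f' x, y - x⟫ - L / 2 * t ^ 2 * ‖y - x‖ ^ 2
  have hψ : ∀ t, HasDerivAt ψ (⟪f' (lineMap x y t) - f' x, y - x⟫ - L * t * ‖y - x‖ ^ 2) t := by
    intro t
    refine ((((hf _).hasDerivAt_comp_lineMap).sub ((hasDerivAt_id t).mul_const _)).sub
      (((hasDerivAt_pow 2 t).const_mul (L / 2)).mul_const (‖y - x‖ ^ 2))).congr_deriv ?_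
    rw [inner_sub_left]
    ring
  have hanti : AntitoneOn ψ (Icc 0 1) := by
    refine antitoneOn_of_deriv_nonpos (convex_Icc 0 1)
      (fun t _ => (hψ t).continuousAt.continuousWithinAt)
      (fun t _ => (hψ t).differentiableAt.differentiableWithinAt) fun t ht => ?_
    rw [interior_Icc] at ht
    have hdist : ‖lineMap x y t - x‖ = t * ‖y - x‖ := by
      rw [lineMap_apply, vsub_eq_sub, vadd_eq_add, add_sub_cancel_right, norm_smul,
        Real.norm_of_nonneg ht.1.le]
    calc deriv ψ t
        ≤ ‖f' (lineMap x y t) - f' x‖ * ‖y - x‖ - L * t * ‖y - x‖ ^ 2 := by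
          rw [(hψ t).deriv]; gcongr; exact real_inner_le_norm _ _
      _ ≤ L * (t * ‖y - x‖) * ‖y - x‖ - L * t * ‖y - x‖ ^ 2 := by
          gcongr; exact hdist ▸ hlip _ _
      _ = 0 := by ring
  have h01 := hanti (left_mem_Icc.2 zero_le_one) (right_mem_Icc.2 zero_le_one) zero_le_one
  simp only [ψ, lineMap_apply_one, lineMap_apply_zero, one_mul, one_pow, mul_one, zero_mul,
    sub_zero, ne_eq, OfNat.ofNat_ne_zero, not_false_eq_true, zero_pow, mul_zero] at h01
  linarith

theorem prox_grad_inequality {g : E → ℝ} {L s : ℝ} {u p : E} (hfc : ConvexOn ℝ univ f)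
    (hf : ∀ x, HasGradientAt f (f' x) x) (hlip : ∀ x y, ‖f' x - f' y‖ ≤ L * ‖x - y‖)
    (hg : ConvexOn ℝ univ g) (hs : 0 < s)
    (hp : IsMinOn (fun z => 1 / (2 * s) * ‖z - (u - s • f' u)‖ ^ 2 + g z) univ p) (z : E) :
    2 * s * (f p + g p) ≤ 2 * s * (f z + g z) + ‖u - z‖ ^ 2 - ‖p - z‖ ^ 2
      - (1 - L * s) * ‖u - p‖ ^ 2 := by
  have hdesc := le_add_inner_add_sq_of_lipschitz_gradient hf hlip u p
  have hgrad := hfc.add_inner_le_of_hasGradientAt (hf u) z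
  have hprox := hp.add_inner_le_of_prox hg z
  have hsprox : s * (s⁻¹ * ⟪u - s • f' u - p, z - p⟫) = ⟪u - p, z - p⟫ - s * ⟪f' u, z - p⟫ := by
    rw [← mul_assoc, mul_inv_cancel₀ hs.ne', one_mul, sub_right_comm, inner_sub_left,
      real_inner_smul_left]
  have hinner : ⟪f' u, p - u⟫ - ⟪f' u, z - u⟫ + ⟪f' u, z - p⟫ = 0 := by
    simp only [inner_sub_right]; ring
  have hcross : 2 * ⟪u - p, z - p⟫ = ‖u - p‖ ^ 2 + ‖p - z‖ ^ 2 - ‖u - z‖ ^ 2 := by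
    rw [show u - z = (u - p) - (z - p) by abel, norm_sub_sq_real (u - p), norm_sub_rev z p]
    ring
  rw [norm_sub_rev p u] at hdesc
  linear_combination (2 * s) * hdesc + (2 * s) * hgrad + (2 * s) * hprox - 2 * hsprox
    + 2 * s * hinner - hcross

end Gradient

lemma summable_of_succ_add_le {V b : ℕ → ℝ} (hb : ∀ k, 0 ≤ b k) (hV : ∀ k, 0 ≤ V k)
    (h : ∀ k, V (k + 1) + b k ≤ V k) : Summable b :=
  summable_of_sum_range_le (c := V 0) hb fun n => by
    have := sum_le_sum fun k (_ : k ∈ Finset.range n) => le_sub_iff_add_le'.2 (h k)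
    rw [sum_range_sub'] at this
    linarith [hV n]

theorem tendsto_pow_succ_mul_inf'_of_summable {a : ℕ → ℝ} (ha : ∀ k, 0 ≤ a k) (p : ℕ)
    (h : Summable fun k : ℕ => ((k : ℝ) + 1) ^ p * a k) :
    Tendsto (fun k : ℕ => (k : ℝ) ^ (p + 1) *
      (Finset.range (k + 1)).inf' nonempty_range_add_one a) atTop (𝓝 0) := by
  set b : ℕ → ℝ := fun k => ((k : ℝ) + 1) ^ p * a k
  have htail : Tendsto (fun k => 2 ^ (p + 1) * ∑' i, b (i + k / 2)) atTop (𝓝 0) := by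
    simpa using ((tendsto_sum_nat_add b).comp (Nat.tendsto_div_const_atTop two_ne_zero)).const_mul
      ((2 : ℝ) ^ (p + 1))
  have hmin : ∀ k, 0 ≤ (Finset.range (k + 1)).inf' nonempty_range_add_one a :=
    fun k => le_inf' _ _ fun i _ => ha i
  refine squeeze_zero (fun k => mul_nonneg (by positivity) (hmin k)) (fun k => ?_) htail
  set m := (Finset.range (k + 1)).inf' nonempty_range_add_one a
  have hm : 0 ≤ m := hmin k
  set n := k / 2
  have hterm : ∀ i ∈ Finset.range (k + 1 - n), (((k : ℝ) + 1) / 2) ^ p * m ≤ b (i + n) := by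
    intro i hi
    have hik : i + n ≤ k := by rw [Finset.mem_range] at hi; omega
    have hkn : ((k : ℝ) + 1) / 2 ≤ (i + n : ℕ) + 1 := by
      rw [div_le_iff₀ two_pos]; exact_mod_cast (by omega : k + 1 ≤ (i + n + 1) * 2)
    exact mul_le_mul (pow_le_pow_left₀ (by positivity) hkn p)
      (inf'_le _ (Finset.mem_range.2 (by omega))) hm (by positivity)
  have hcard : ((k : ℝ) + 1) / 2 ≤ (k + 1 - n : ℕ) := by
    rw [div_le_iff₀ two_pos]; exact_mod_cast (by omega : k + 1 ≤ (k + 1 - n) * 2)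
  calc (k : ℝ) ^ (p + 1) * m
      ≤ (2 * (((k : ℝ) + 1) / 2)) ^ (p + 1) * m := by
        rw [mul_div_cancel₀ _ two_ne_zero]
        gcongr
        linarith
    _ = 2 ^ (p + 1) * ((((k : ℝ) + 1) / 2) * ((((k : ℝ) + 1) / 2) ^ p * m)) := by
        rw [mul_pow, pow_succ' (((k : ℝ) + 1) / 2)]; ring
    _ ≤ 2 ^ (p + 1) * ∑ i ∈ Finset.range (k + 1 - n), b (i + n) := by
        gcongr
        have := card_nsmul_le_sum _ _ _ hterm
        rw [card_range, nsmul_eq_mul] at this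
        exact (mul_le_mul_of_nonneg_right hcard (by positivity)).trans this
    _ ≤ 2 ^ (p + 1) * ∑' i, b (i + n) := by
        gcongr
        exact ((summable_nat_add_iff n).2 h).sum_le_tsum _
          fun i _ => mul_nonneg (by positivity) (ha _)

noncomputable def fistaWeight (r : ℝ) (k : ℕ) : ℝ := ((k : ℝ) + r - 1) / r

lemma fistaWeight_succ (r : ℝ) (k : ℕ) : fistaWeight r (k + 1) = ((k : ℝ) + r) / r := by
  rw [fistaWeight, Nat.cast_succ, add_right_comm, add_sub_cancel_right]

lemma fistaWeight_succ_mul_sub_one_le_sq {r : ℝ} (hr : 2 ≤ r) (k : ℕ) :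
    fistaWeight r (k + 1) * (fistaWeight r (k + 1) - 1) ≤ fistaWeight r k ^ 2 := by
  have hr0 : 0 < r := by linarith
  rw [fistaWeight_succ, fistaWeight, div_sub_one hr0.ne', div_mul_div_comm, div_pow,
    ← sq, div_le_div_iff_of_pos_right (by positivity)]
  nlinarith [mul_nonneg k.cast_nonneg (sub_nonneg.2 hr)]

section Energy

variable {E : Type*} [NormedAddCommGroup E] [InnerProductSpace ℝ E]

noncomputable def fistaEnergy (r s : ℝ) (Φ : E → ℝ) (xstar : E) (x y : ℕ → E) (k : ℕ) : ℝ :=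
  fistaWeight r k ^ 2 * (2 * s * (Φ (x k) - Φ xstar))
    + ‖fistaWeight r (k + 1) • y k - ((fistaWeight r (k + 1) - 1) • x k + xstar)‖ ^ 2

lemma norm_smul_sub_sq_sub_norm_smul_sub_sq (T : ℝ) (u v a b : E) :
    ‖T • u - ((T - 1) • a + b)‖ ^ 2 - ‖T • v - ((T - 1) • a + b)‖ ^ 2
      = T * (T - 1) * (‖u - a‖ ^ 2 - ‖v - a‖ ^ 2) + T * (‖u - b‖ ^ 2 - ‖v - b‖ ^ 2) := by
  simp only [← real_inner_self_eq_norm_sq, inner_sub_left, inner_sub_right, inner_add_left,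
    inner_add_right, real_inner_smul_left, real_inner_smul_right, real_inner_comm a u,
    real_inner_comm b u, real_inner_comm a v, real_inner_comm b v, real_inner_comm b a]
  ring

variable {r s c : ℝ} {Φ : E → ℝ} {xstar : E} {x y : ℕ → E}

lemma fistaEnergy_nonneg (hs : 0 ≤ s) (hstar : ∀ z, Φ xstar ≤ Φ z) (k : ℕ) :
    0 ≤ fistaEnergy r s Φ xstar x y k := by
  have := sub_nonneg.2 (hstar (x k))
  unfold fistaEnergy
  positivity

lemma fistaEnergy_succ_add_le (hs : 0 ≤ s) (hr : 2 ≤ r) (hstar : ∀ z, Φ xstar ≤ Φ z) (k : ℕ)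
    (hkey : ∀ z, 2 * s * Φ (x (k + 1)) ≤ 2 * s * Φ z + ‖y k - z‖ ^ 2 - ‖x (k + 1) - z‖ ^ 2
      - c * ‖y k - x (k + 1)‖ ^ 2)
    (hy : y (k + 1) = x (k + 1) + ((k : ℝ) / (k + 1 + r)) • (x (k + 1) - x k)) :
    fistaEnergy r s Φ xstar x y (k + 1) + c * fistaWeight r (k + 1) ^ 2 * ‖y k - x (k + 1)‖ ^ 2
      ≤ fistaEnergy r s Φ xstar x y k := by
  set T := fistaWeight r (k + 1)
  have hr0 : 0 < r := by linarith
  have hT_eq : T = ((k : ℝ) + r) / r := fistaWeight_succ r k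
  have hT : 1 ≤ T := by
    rw [hT_eq, le_div_iff₀ hr0]; linarith [k.cast_nonneg (α := ℝ)]
  -- the momentum coefficient `k / (k + 1 + r)` equals `(T_{k+1} - 1) / T_{k+2}`
  have hshift : fistaWeight r (k + 1 + 1) • y (k + 1)
      - ((fistaWeight r (k + 1 + 1) - 1) • x (k + 1) + xstar)
      = T • x (k + 1) - ((T - 1) • x k + xstar) := by
    have : (k : ℝ) + 1 + r ≠ 0 := by positivity
    rw [hy, fistaWeight_succ, hT_eq]
    push_cast
    match_scalars <;> field_simp <;> ring
  have hnorm := norm_smul_sub_sq_sub_norm_smul_sub_sq T (y k) (x (k + 1)) (x k) xstar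
  have hprev := mul_le_mul_of_nonneg_left (hkey (x k)) (by nlinarith : 0 ≤ T * (T - 1))
  have hstar' := mul_le_mul_of_nonneg_left (hkey xstar) (by linarith : 0 ≤ T)
  have hweight := mul_le_mul_of_nonneg_right (fistaWeight_succ_mul_sub_one_le_sq hr k)
    (by nlinarith [hstar (x k)] : 0 ≤ 2 * s * (Φ (x k) - Φ xstar))
  unfold fistaEnergy
  rw [hshift]
  linear_combination hprev + hstar' - hnorm + hweight

theorem fista_summable_succ_sq_mul_norm_sub_sq (hs : 0 ≤ s) (hr : 2 ≤ r) (hc : 0 < c)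
    (hstar : ∀ z, Φ xstar ≤ Φ z)
    (hkey : ∀ k z, 2 * s * Φ (x (k + 1)) ≤ 2 * s * Φ z + ‖y k - z‖ ^ 2 - ‖x (k + 1) - z‖ ^ 2
      - c * ‖y k - x (k + 1)‖ ^ 2)
    (hy : ∀ k : ℕ, y (k + 1) = x (k + 1) + ((k : ℝ) / (k + 1 + r)) • (x (k + 1) - x k)) :
    Summable fun k : ℕ => ((k : ℝ) + 1) ^ 2 * ‖y k - x (k + 1)‖ ^ 2 := by
  have hdecay := summable_of_succ_add_le (fun k => by positivity) (fistaEnergy_nonneg hs hstar)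
    fun k => fistaEnergy_succ_add_le (y := y) hs hr hstar k (hkey k) (hy k)
  refine (hdecay.mul_left (r ^ 2 / c)).of_nonneg_of_le (fun k => by positivity) fun k => ?_
  have hweight : r ^ 2 / c * (c * fistaWeight r (k + 1) ^ 2) = ((k : ℝ) + r) ^ 2 := by
    rw [fistaWeight_succ]
    field_simp
  rw [← mul_assoc, hweight]
  gcongr
  linarith

end Energy

theorem fista_subgradient_norm_little_o_general {d : ℕ}
    (f g : EuclideanSpace ℝ (Fin d) → ℝ)
    (f' : EuclideanSpace ℝ (Fin d) → EuclideanSpace ℝ (Fin d))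
    (L s r : ℝ) (hs : 0 < s) (hr : 2 ≤ r)
    (hfconv : ConvexOn ℝ Set.univ f)
    (hf' : ∀ x, HasGradientAt f (f' x) x)
    (hlip : ∀ x y, ‖f' x - f' y‖ ≤ L * ‖x - y‖)
    (hgconv : ConvexOn ℝ Set.univ g)
    (Φ : EuclideanSpace ℝ (Fin d) → ℝ) (hΦ : ∀ x, Φ x = f x + g x)
    (P : EuclideanSpace ℝ (Fin d) → EuclideanSpace ℝ (Fin d))
    (hP : ∀ x, IsMinOn (fun z => 1 / (2 * s) * ‖z - (x - s • f' x)‖ ^ 2 + g z) Set.univ (P x))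
    (G : EuclideanSpace ℝ (Fin d) → EuclideanSpace ℝ (Fin d))
    (hG : ∀ x, G x = s⁻¹ • (x - P x))
    (xstar : EuclideanSpace ℝ (Fin d)) (hstar : IsMinOn Φ Set.univ xstar)
    (x y : ℕ → EuclideanSpace ℝ (Fin d))
    (hx : ∀ k : ℕ, x (k + 1) = y k - s • G (y k))
    (hy : ∀ k : ℕ, y (k + 1) =
      x (k + 1) + ((((k : ℝ) + 1) - 1) / (((k : ℝ) + 1) + r)) • (x (k + 1) - x k))
    (hsL : s < 1 / L) :
    Filter.Tendsto
      (fun k : ℕ => (k : ℝ) ^ 3 *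
        Finset.inf' (Finset.range (k + 1)) Finset.nonempty_range_add_one
          (fun i => ‖G (y i)‖ ^ 2))
      Filter.atTop (𝓝 0) := by
  have hLs : 0 < 1 - L * s := by
    rcases le_or_gt L 0 with hL | hL
    · nlinarith
    · rw [lt_div_iff₀ hL] at hsL; linarith
  have hPy : ∀ k, P (y k) = x (k + 1) := fun k => by
    rw [hx, hG, smul_smul, mul_inv_cancel₀ hs.ne', one_smul, sub_sub_cancel]
  have hkey : ∀ k z, 2 * s * Φ (x (k + 1)) ≤ 2 * s * Φ z + ‖y k - z‖ ^ 2 - ‖x (k + 1) - z‖ ^ 2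
      - (1 - L * s) * ‖y k - x (k + 1)‖ ^ 2 := fun k z => by
    simpa only [hΦ, hPy] using prox_grad_inequality hfconv hf' hlip hgconv hs (hP (y k)) z
  have hsum := fista_summable_succ_sq_mul_norm_sub_sq hs.le hr hLs (isMinOn_univ_iff.mp hstar)
    hkey fun k => by simpa only [add_sub_cancel_right] using hy k
  refine tendsto_pow_succ_mul_inf'_of_summable (fun k => sq_nonneg _) 2
    ((hsum.mul_left (s ^ 2)⁻¹).congr fun k => ?_)
  rw [hx, sub_sub_cancel, norm_smul, Real.norm_of_nonneg hs.le]
  field_simp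

/-- **FISTA inverse-cubic little-o rate for the proximal subgradient norm.** For momentum
`r ≥ 2` and step size `0 < s < 1/L`, `lim_{k→∞} k³·min_{0 ≤ i ≤ k} ‖G_s(y_i)‖² = 0`. -/
theorem fista_subgradient_norm_little_o {d : ℕ}
    (f g : EuclideanSpace ℝ (Fin d) → ℝ)
    (f' : EuclideanSpace ℝ (Fin d) → EuclideanSpace ℝ (Fin d))
    (L s r : ℝ) (hL : 0 < L) (hs : 0 < s) (hr : 2 ≤ r)
    (hfconv : ConvexOn ℝ Set.univ f)
    (hf' : ∀ x, HasGradientAt f (f' x) x)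
    (hlip : ∀ x y, ‖f' x - f' y‖ ≤ L * ‖x - y‖)
    (hgconv : ConvexOn ℝ Set.univ g) (hgcont : Continuous g)
    (Φ : EuclideanSpace ℝ (Fin d) → ℝ) (hΦ : ∀ x, Φ x = f x + g x)
    (P : EuclideanSpace ℝ (Fin d) → EuclideanSpace ℝ (Fin d))
    (hP : ∀ x, IsMinOn (fun z => 1 / (2 * s) * ‖z - (x - s • f' x)‖ ^ 2 + g z) Set.univ (P x))
    (G : EuclideanSpace ℝ (Fin d) → EuclideanSpace ℝ (Fin d))
    (hG : ∀ x, G x = s⁻¹ • (x - P x))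
    (xstar : EuclideanSpace ℝ (Fin d)) (hstar : IsMinOn Φ Set.univ xstar)
    (x y : ℕ → EuclideanSpace ℝ (Fin d)) (hxy0 : x 0 = y 0)
    (hx : ∀ k : ℕ, x (k + 1) = y k - s • G (y k))
    (hy : ∀ k : ℕ, y (k + 1) =
      x (k + 1) + ((((k : ℝ) + 1) - 1) / (((k : ℝ) + 1) + r)) • (x (k + 1) - x k))
    (hsL : s < 1 / L) :
    Filter.Tendsto
      (fun k : ℕ => (k : ℝ) ^ 3 *
        Finset.inf' (Finset.range (k + 1)) Finset.nonempty_range_add_one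
          (fun i => ‖G (y i)‖ ^ 2))
      Filter.atTop (𝓝 0) :=
  fista_subgradient_norm_little_o_general f g f' L s r hs hr hfconv hf' hlip hgconv Φ hΦ P hP G hG
    xstar hstar x y hx hy hsL
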